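/- The Voronoi cell of the lattice D̄_d★ = (2ℤ^d) ∪ (𝟏 + 2ℤ^d) satisfies VC(D̄_d★) = [−1,1]^d ∩ (d/2)·conv{±e_1,…,±e_d}, i.e., it is the intersection of a cube and a dilated crosspolytope. Consequently xc(VC(D_d★)) = O(d). -/

import Mathlib

open scoped RealInnerProductSpace

/-- A polytope: the convex hull of finitely many points. -/
def IsPolytope {E : Type*} [AddCommGroup E] [Module ℝ E] (P : Set E) : Prop :=
  ∃ s : Finset E, P = convexHull ℝ (s : Set E)

/-- The extension complexity of `P`: the minimal number of (facet-defining)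
inequalities of a polytope (a bounded polyhedron, in any dimension) that linearly
projects onto `P`. -/
noncomputable def xc {E : Type*} [AddCommGroup E] [Module ℝ E] (P : Set E) : ℕ :=
  sInf {m | ∃ (n : ℕ) (A : Fin m → Fin n → ℝ) (b : Fin m → ℝ)
      (π : (Fin n → ℝ) →ₗ[ℝ] E),
      Bornology.IsBounded {x : Fin n → ℝ | ∀ i, ∑ j, A i j * x j ≤ b i} ∧
      π '' {x : Fin n → ℝ | ∀ i, ∑ j, A i j * x j ≤ b i} = P}

open scoped Pointwise

/-- The (rescaled) dual `D̄_d★ = (2ℤ^d) ∪ (𝟏 + 2ℤ^d)` of the checkerboard lattice. -/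
def dualD (d : ℕ) : Set (EuclideanSpace ℝ (Fin d)) :=
  {x | (∀ i, ∃ z : ℤ, x i = 2 * (z : ℝ)) ∨ (∀ i, ∃ z : ℤ, x i = 2 * (z : ℝ) + 1)}

/-- The Voronoi cell of the (full-dimensional) lattice `D̄_d★`. -/
def vorCellDualD (d : ℕ) : Set (EuclideanSpace ℝ (Fin d)) :=
  {x | ∀ z ∈ dualD d, ‖x‖ ≤ ‖x - z‖}

/-- The standard crosspolytope `conv{±e_1, …, ±e_d}`. -/
def crossPolytope (d : ℕ) : Set (EuclideanSpace ℝ (Fin d)) :=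
  convexHull ℝ {x | ∃ i, x = EuclideanSpace.single i (1 : ℝ) ∨
    x = -EuclideanSpace.single i (1 : ℝ)}

/-!
Since `‖x‖ ≤ ‖x - z‖ ↔ 2⟪x, z⟫ ≤ ‖z‖²`, testing `x` against the lattice points `±2eᵢ` and
against its own sign vector in `{-1, 1}^d` gives `|xᵢ| ≤ 1` and `∑ |xᵢ| ≤ d/2`. Conversely,
under these bounds every `z ∈ 2ℤ^d` satisfies `2xᵢzᵢ ≤ zᵢ²` coordinatewise, and every
`z ∈ 𝟏 + 2ℤ^d` satisfies `2xᵢzᵢ ≤ zᵢ² - 1 + 2|xᵢ|`, which sums to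
`2⟪x, z⟫ ≤ ‖z‖² - d + 2∑ |xᵢ| ≤ ‖z‖²`.
The cube cut by the `ℓ¹`-ball is the projection of
`{(x, y) : |xᵢ| ≤ 1, |xᵢ| ≤ yᵢ, ∑ yᵢ ≤ d/2}`, a bounded polyhedron with `4d + 1` inequalities.
-/
theorem norm_le_norm_sub_iff_two_inner_le {F : Type*} [SeminormedAddCommGroup F]
    [InnerProductSpace ℝ F] (x z : F) : ‖x‖ ≤ ‖x - z‖ ↔ 2 * ⟪x, z⟫ ≤ ‖z‖ ^ 2 := by
  rw [← sq_le_sq₀ (norm_nonneg _) (norm_nonneg _), norm_sub_sq_real]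
  constructor <;> intro <;> linarith

theorem two_mul_mul_even_le {a : ℝ} (ha : |a| ≤ 1) (c : ℤ) :
    2 * a * (2 * c) ≤ (2 * c : ℝ) ^ 2 := by
  have hc : |(c : ℝ)| ≤ (c : ℝ) ^ 2 := by exact_mod_cast Int.natAbs_le_self_sq c
  have hac : a * c ≤ |(c : ℝ)| := (le_abs_self _).trans <| by
    rw [abs_mul]; exact mul_le_of_le_one_left (abs_nonneg _) ha
  nlinarith

theorem two_mul_mul_odd_le {a : ℝ} (ha : |a| ≤ 1) (c : ℤ) :
    2 * a * (2 * c + 1) ≤ (2 * c + 1 : ℝ) ^ 2 - 1 + 2 * |a| := by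
  have hz : 1 ≤ |(2 * c + 1 : ℝ)| := by exact_mod_cast Int.one_le_abs (by omega : 2 * c + 1 ≠ 0)
  set z : ℝ := 2 * c + 1
  have haz : a * z ≤ |a| * |z| := abs_mul a z ▸ le_abs_self _
  -- `z² - 1 + 2|a| - 2|a||z| = (|z| - 1)(|z| + 1 - 2|a|)`
  nlinarith [mul_nonneg (sub_nonneg.2 hz) (by linarith : 0 ≤ |z| + 1 - 2 * |a|), sq_abs z]

def l1Ball (ι : Type*) [Fintype ι] (r : ℝ) : Set (EuclideanSpace ℝ ι) :=
  {x | ∑ i, |x i| ≤ r}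

section L1Ball

variable {ι : Type*} [Fintype ι]

theorem convex_l1Ball (r : ℝ) : Convex ℝ (l1Ball ι r) := by
  intro x hx y hy a b ha hb hab
  calc ∑ i, |a * x i + b * y i| ≤ ∑ i, (a * |x i| + b * |y i|) := by
        gcongr with i
        exact (abs_add_le _ _).trans_eq <| by
          rw [abs_mul, abs_mul, abs_of_nonneg ha, abs_of_nonneg hb]
    _ = a * ∑ i, |x i| + b * ∑ i, |y i| := by
        rw [Finset.sum_add_distrib, Finset.mul_sum, Finset.mul_sum]
    _ ≤ a * r + b * r := by gcongr; exacts [hx, hy]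
    _ = r := by rw [← add_mul, hab, one_mul]

theorem smul_l1Ball {c : ℝ} (hc : 0 < c) : c • l1Ball ι 1 = l1Ball ι c := by
  ext x
  rw [Set.mem_smul_set_iff_inv_smul_mem₀ hc.ne']
  simp only [l1Ball, Set.mem_ofPred_eq, PiLp.smul_apply, smul_eq_mul, abs_mul,
    abs_of_pos (inv_pos.2 hc), ← Finset.mul_sum, inv_mul_le_iff₀ hc, mul_one]

end L1Ball

theorem crossPolytope_eq_l1Ball {d : ℕ} (hd : 1 ≤ d) : crossPolytope d = l1Ball (Fin d) 1 := by
  set G : Set (EuclideanSpace ℝ (Fin d)) :=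
    {x | ∃ i, x = EuclideanSpace.single i 1 ∨ x = -EuclideanSpace.single i 1}
  refine subset_antisymm (convexHull_min ?_ (convex_l1Ball 1)) fun x hx => ?_
  · rintro x ⟨i, rfl | rfl⟩ <;> simp [l1Ball, PiLp.single_apply, apply_ite abs]
  have hsingle : ∀ i, EuclideanSpace.single i 1 ∈ convexHull ℝ G ∧
      -EuclideanSpace.single i 1 ∈ convexHull ℝ G := fun i =>
    ⟨subset_convexHull ℝ G ⟨i, .inl rfl⟩, subset_convexHull ℝ G ⟨i, .inr rfl⟩⟩
  have hzero : 0 ∈ convexHull ℝ G := by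
    obtain ⟨h₁, h₂⟩ := hsingle ⟨0, hd⟩
    convert (convex_convexHull ℝ G).add_smul_sub_mem h₁ h₂ (t := 1 / 2) ⟨by norm_num, by norm_num⟩
      using 1
    module
  let p i : EuclideanSpace ℝ (Fin d) :=
    if 0 ≤ x i then EuclideanSpace.single i 1 else -EuclideanSpace.single i 1
  have hp : ∀ i, |x i| • p i = x i • EuclideanSpace.single i 1 := fun i => by
    by_cases h : 0 ≤ x i
    · simp [p, h, abs_of_nonneg h]
    · simp [p, h, abs_of_neg (not_le.1 h)]
  -- `x` is the convex combination `(1 - ‖x‖₁) • 0 + ∑ i, |x i| • p i`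
  have hmem := (convex_convexHull ℝ G).sum_mem (t := .univ)
    (w := fun o : Option (Fin d) => o.elim (1 - ∑ i, |x i|) fun i => |x i|)
    (z := fun o => o.elim 0 p) ?_ ?_ ?_
  · simp only [Fintype.sum_option, Option.elim, smul_zero, zero_add, hp] at hmem
    rwa [show ∑ i, x i • EuclideanSpace.single i 1 = x by
      simpa using (EuclideanSpace.basisFun (Fin d) ℝ).sum_repr x] at hmem
  · rintro (_ | i) - <;> simp only [Option.elim]
    exacts [sub_nonneg.2 hx, abs_nonneg _]
  · simp [Fintype.sum_option]
  · rintro (_ | i) - <;> simp only [Option.elim]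
    · exact hzero
    · by_cases h : 0 ≤ x i <;> simp [p, h, hsingle]

section VoronoiCell

variable {d : ℕ} {x : EuclideanSpace ℝ (Fin d)}

theorem mem_vorCellDualD_iff : x ∈ vorCellDualD d ↔ ∀ z ∈ dualD d, 2 * ⟪x, z⟫ ≤ ‖z‖ ^ 2 :=
  forall₂_congr fun z _ => norm_le_norm_sub_iff_two_inner_le x z

theorem single_two_mul_mem_dualD (i : Fin d) (c : ℤ) :
    EuclideanSpace.single i (2 * c : ℝ) ∈ dualD d :=
  .inl fun k => by
    by_cases h : k = i
    · exact ⟨c, by simp [h]⟩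
    · exact ⟨0, by simp [h]⟩

theorem abs_le_one_of_mem_vorCellDualD (hx : x ∈ vorCellDualD d) (i : Fin d) : |x i| ≤ 1 := by
  have h c := mem_vorCellDualD_iff.1 hx _ (single_two_mul_mem_dualD i c)
  have h₁ := h 1
  have h₂ := h (-1)
  simp only [EuclideanSpace.inner_single_right, PiLp.norm_single] at h₁ h₂
  norm_num at h₁ h₂
  exact abs_le.2 ⟨by linarith, by linarith⟩

theorem sum_abs_le_of_mem_vorCellDualD (hx : x ∈ vorCellDualD d) : ∑ i, |x i| ≤ d / 2 := by
  let s : EuclideanSpace ℝ (Fin d) := WithLp.toLp 2 fun i => if 0 ≤ x i then 1 else -1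
  have hs : s ∈ dualD d := .inr fun i => by
    by_cases h : 0 ≤ x i
    · exact ⟨0, by simp [s, h]⟩
    · exact ⟨-1, by norm_num [s, h]⟩
  have hinner : ⟪x, s⟫ = ∑ i, |x i| := by
    rw [PiLp.inner_apply]
    refine Finset.sum_congr rfl fun i _ => ?_
    by_cases h : 0 ≤ x i
    · simp [s, h, abs_of_nonneg h]
    · simp [s, h, abs_of_neg (not_le.1 h)]
  have hnorm : ‖s‖ ^ 2 = d := by
    rw [EuclideanSpace.norm_sq_eq]
    simp [s, apply_ite]
  have := mem_vorCellDualD_iff.1 hx s hs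
  linarith

theorem mem_vorCellDualD_of_abs_le (hcube : ∀ i, |x i| ≤ 1) (hsum : ∑ i, |x i| ≤ d / 2) :
    x ∈ vorCellDualD d := by
  refine mem_vorCellDualD_iff.2 fun z hz => ?_
  simp only [PiLp.inner_apply, Real.inner_apply, Finset.mul_sum, ← mul_assoc,
    EuclideanSpace.norm_sq_eq, Real.norm_eq_abs, sq_abs]
  rcases hz with heven | hodd
  · refine Finset.sum_le_sum fun i _ => ?_
    obtain ⟨c, hc⟩ := heven i
    rw [hc]
    exact two_mul_mul_even_le (hcube i) c
  · calc ∑ i, 2 * x i * z i ≤ ∑ i, (z i ^ 2 - 1 + 2 * |x i|) :=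
          Finset.sum_le_sum fun i _ => by
            obtain ⟨c, hc⟩ := hodd i
            rw [hc]
            exact two_mul_mul_odd_le (hcube i) c
      _ = ∑ i, z i ^ 2 - d + 2 * ∑ i, |x i| := by
          simp [Finset.sum_add_distrib, Finset.sum_sub_distrib, Finset.mul_sum]
      _ ≤ ∑ i, z i ^ 2 := by linarith

theorem vorCellDualD_eq : vorCellDualD d = {x | ∀ i, |x i| ≤ 1} ∩ l1Ball (Fin d) (d / 2) :=
  Set.ext fun _ =>
    ⟨fun hx => ⟨abs_le_one_of_mem_vorCellDualD hx, sum_abs_le_of_mem_vorCellDualD hx⟩,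
      fun ⟨hcube, hsum⟩ => mem_vorCellDualD_of_abs_le hcube hsum⟩

end VoronoiCell

theorem xc_image_le_card {E ι κ : Type*} [AddCommGroup E] [Module ℝ E] [Fintype ι] [Fintype κ]
    (f : ι → (κ → ℝ) →ₗ[ℝ] ℝ) (b : ι → ℝ) (π : (κ → ℝ) →ₗ[ℝ] E)
    (hbdd : Bornology.IsBounded {v | ∀ i, f i v ≤ b i}) :
    xc (π '' {v | ∀ i, f i v ≤ b i}) ≤ Fintype.card ι := by
  classical
  let eι := Fintype.equivFin ι
  let L := LinearEquiv.funCongrLeft ℝ ℝ (Fintype.equivFin κ)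
  let A i j := f (eι.symm i) (L fun k => if j = k then 1 else 0)
  have hQ : {w | ∀ i, ∑ j, A i j * w j ≤ b (eι.symm i)} = L.symm '' {v | ∀ i, f i v ≤ b i} := by
    rw [L.image_symm_eq_preimage]
    ext w
    simp only [Set.mem_ofPred_eq, Set.mem_preimage, eι.symm.forall_congr_left, Equiv.symm_symm,
      Equiv.symm_apply_apply]
    refine forall_congr' fun i => ?_
    rw [← L.coe_toLinearMap, ← LinearMap.comp_apply,
      LinearMap.pi_apply_eq_sum_univ (f i ∘ₗ L.toLinearMap) w]
    simp [A, mul_comm]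
  refine Nat.sInf_le ⟨_, A, fun i => b (eι.symm i), π ∘ₗ L.toLinearMap, ?_, ?_⟩
  · rw [hQ]
    exact (LinearMap.toContinuousLinearMap L.symm.toLinearMap).lipschitz.isBounded_image hbdd
  · rw [hQ, ← Set.image_comp]
    simp

section LiftedCell

variable (ι : Type*) [Fintype ι]

-- The coordinates `.inl i` carry `xᵢ`, the coordinates `.inr i` the auxiliary `yᵢ ≥ |xᵢ|`.
def liftedIneq : (ι ⊕ ι) ⊕ (ι ⊕ ι) ⊕ Unit → (ι ⊕ ι → ℝ) →ₗ[ℝ] ℝ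
  | .inl (.inl i) => .proj (.inl i)
  | .inl (.inr i) => -.proj (.inl i)
  | .inr (.inl (.inl i)) => .proj (.inl i) - .proj (.inr i)
  | .inr (.inl (.inr i)) => -.proj (.inl i) - .proj (.inr i)
  | .inr (.inr ()) => ∑ i, .proj (.inr i)

def liftedRhs (r : ℝ) : (ι ⊕ ι) ⊕ (ι ⊕ ι) ⊕ Unit → ℝ
  | .inl _ => 1
  | .inr (.inl _) => 0
  | .inr (.inr ()) => r

def liftedCell (r : ℝ) : Set (ι ⊕ ι → ℝ) :=
  {v | ∀ c, liftedIneq ι c v ≤ liftedRhs ι r c}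

def liftProj : (ι ⊕ ι → ℝ) →ₗ[ℝ] EuclideanSpace ℝ ι :=
  (WithLp.linearEquiv 2 ℝ (ι → ℝ)).symm.toLinearMap ∘ₗ LinearMap.funLeft ℝ ℝ Sum.inl

variable {ι}

theorem mem_liftedCell_iff {r : ℝ} {v : ι ⊕ ι → ℝ} :
    v ∈ liftedCell ι r ↔ (∀ i, |v (.inl i)| ≤ 1) ∧ (∀ i, |v (.inl i)| ≤ v (.inr i)) ∧
      ∑ i, v (.inr i) ≤ r := by
  simp only [liftedCell, Set.mem_ofPred_eq, Sum.forall, liftedIneq, liftedRhs, LinearMap.neg_apply,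
    LinearMap.sub_apply, LinearMap.coe_sum, Finset.sum_apply, LinearMap.proj_apply, abs_le,
    forall_and, sub_nonpos, neg_le, forall_const]
  tauto

theorem isBounded_liftedCell (r : ℝ) : Bornology.IsBounded (liftedCell ι r) := by
  refine isBounded_iff_forall_norm_le.2 ⟨1 + |r|, fun v hv => ?_⟩
  obtain ⟨hcube, habs, hsum⟩ := mem_liftedCell_iff.1 hv
  have hy i : 0 ≤ v (.inr i) := (abs_nonneg _).trans (habs i)
  refine (pi_norm_le_iff_of_nonneg (by positivity)).2 ?_
  rintro (i | i) <;> rw [Real.norm_eq_abs]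
  · linarith [hcube i, abs_nonneg r]
  · have := Finset.single_le_sum (fun j _ => hy j) (Finset.mem_univ i)
    rw [abs_of_nonneg (hy i)]
    linarith [le_abs_self r]

theorem image_liftProj_liftedCell (r : ℝ) :
    liftProj ι '' liftedCell ι r = {x | ∀ i, |x i| ≤ 1} ∩ l1Ball ι r := by
  ext x
  constructor
  · rintro ⟨v, hv, rfl⟩
    obtain ⟨hcube, habs, hsum⟩ := mem_liftedCell_iff.1 hv
    exact ⟨hcube, (Finset.sum_le_sum fun i _ => habs i).trans hsum⟩
  · rintro ⟨hcube, hsum⟩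
    exact ⟨Sum.elim x fun i => |x i|, mem_liftedCell_iff.2 ⟨hcube, fun _ => le_rfl, hsum⟩, rfl⟩

end LiftedCell

/-- `VC(D̄_d★) = [−1,1]^d ∩ (d/2)·conv{±e_1,…,±e_d}`: the Voronoi cell of `D̄_d★`
is the intersection of a cube and a dilated crosspolytope; consequently
`xc(VC(D_d★)) = O(d)`. -/
theorem voronoi_dualD_eq_cube_inter_cross :
    ∃ C : ℕ, ∀ d : ℕ, 1 ≤ d →
      vorCellDualD d =
          {x : EuclideanSpace ℝ (Fin d) | ∀ i, |x i| ≤ 1} ∩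
            ((d : ℝ) / 2) • crossPolytope d ∧
        xc (vorCellDualD d) ≤ C * d := by
  refine ⟨5, fun d hd => ⟨?_, ?_⟩⟩
  · rw [crossPolytope_eq_l1Ball hd, smul_l1Ball (by positivity), vorCellDualD_eq]
  · rw [vorCellDualD_eq, ← image_liftProj_liftedCell]
    calc xc (liftProj (Fin d) '' liftedCell (Fin d) (d / 2))
        ≤ Fintype.card ((Fin d ⊕ Fin d) ⊕ (Fin d ⊕ Fin d) ⊕ Unit) :=
          xc_image_le_card _ _ _ (isBounded_liftedCell _)
      _ ≤ 5 * d := by simp; omega
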